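/- Let j, l, p be positive integers. Then Σ_{n=1}^∞ 1/(n^p (n+j) C(n+l,l)) = Σ_{m=1}^{p-1} ((-1)^{m-1}/j^m) { ζ(p+1-m) + Σ_{a=1}^l C(l,a) (-1)^a μ(p-m, a) } + ((-1)^{p-1}/j^{p-1}) Σ_{s=0}^l (-1)^s C(l,s) B₁(s,j), where μ(q,a) = Σ_{n=1}^∞ 1/(n^q (n+a)) and B₁(s,j) = (H_s - H_j)/(s - j) if s ≠ j, and B₁(j,j) = ζ(2) - H_j^{(2)}. -/

import Mathlib

/-!
Two partial-fraction expansions reduce the series to elementary ones. A geometric sum in `-x/j`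
gives `1/(x^p (x+j)) = ∑_{m=1}^{p-1} (-1)^(m-1) j^(-m) x^(-(p+1-m)) + (-1)^(p-1) j^(1-p)/(x (x+j))`,
and `1/(x C(x+l,l)) = ∑_{s=0}^l (-1)^s C(l,s)/(x+s)` is `(-1)^l` times the `l`-th forward
difference of `1/x`. Summing termwise, `∑ 1/(n^(q+1) C(n+l,l))` becomes a combination of
`ζ(q+1)` and the `μ(q,a)`, and `∑ 1/(n (n+j) C(n+l,l))` a combination of the series
`∑ 1/((n+s)(n+j)) = B₁(s,j)`, which telescope for `s ≠ j` and are tails of `ζ(2)` for `s = j`.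
-/

open Finset

/-- Generalized harmonic number `H_n^(r) = ∑_{k=1}^n 1/k^r`. -/
noncomputable def Hgen (r n : ℕ) : ℝ := ∑ k ∈ Finset.Icc 1 n, (1 : ℝ) / (k : ℝ) ^ r

/-- Hyperharmonic numbers of non-negative order: `hpos 0 n = 1/n`,
`hpos (r+1) n = ∑_{k=1}^n hpos r k`.  In particular `hpos 1 n = H_n`. -/
noncomputable def hpos : ℕ → ℕ → ℝ
  | 0, n => 1 / (n : ℝ)
  | r + 1, n => ∑ k ∈ Finset.Icc 1 n, hpos r k

/-- Hyperharmonic numbers of negative order: `hneg r n = h_n^(-r)` for `r ≥ 1`. -/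
noncomputable def hneg (r n : ℕ) : ℝ :=
  if r < n then (-1 : ℝ) ^ r / (((n - r : ℕ) : ℝ) * (Nat.choose n r : ℝ))
  else ∑ k ∈ Finset.range n, (Nat.choose r k : ℝ) * (-1 : ℝ) ^ k / ((n - k : ℕ) : ℝ)

/-- Hyperharmonic numbers of arbitrary integer order. -/
noncomputable def hh (r : ℤ) (n : ℕ) : ℝ :=
  if 0 ≤ r then hpos r.toNat n else hneg (-r).toNat n

/-- Riemann zeta value `ζ(k) = ∑_{n=1}^∞ 1/n^k`. -/
noncomputable def zetaVal (k : ℕ) : ℝ := ∑' n : ℕ, 1 / ((n : ℝ) + 1) ^ k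

/-- Linear Euler sum `ζ_{H^(s)}(t) = ∑_{n=1}^∞ H_n^(s)/n^t`. -/
noncomputable def eulerSum (s t : ℕ) : ℝ := ∑' n : ℕ, Hgen s (n + 1) / ((n : ℝ) + 1) ^ t

/-- The set of Riemann zeta values `ζ(k)`, `k ≥ 2`. -/
def zetaSet : Set ℝ := {x | ∃ k : ℕ, 2 ≤ k ∧ x = zetaVal k}

/-- The set of Riemann zeta values together with linear Euler sums. -/
def zetaEulerSet : Set ℝ :=
  zetaSet ∪ {x | ∃ s t : ℕ, 1 ≤ s ∧ 2 ≤ t ∧ x = eulerSum s t}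

/-- `μ(q,a) = ∑_{n=1}^∞ 1/(n^q (n+a))`. -/
noncomputable def mu (q a : ℕ) : ℝ :=
  ∑' n : ℕ, 1 / (((n + 1 : ℕ) : ℝ) ^ q * ((n + 1 + a : ℕ) : ℝ))

/-- `B₁(s,j)`. -/
noncomputable def B1 (s j : ℕ) : ℝ :=
  if s = j then zetaVal 2 - Hgen 2 j
  else (Hgen 1 s - Hgen 1 j) / ((s : ℝ) - (j : ℝ))

open Filter Topology fwdDiff
open scoped Nat

theorem sum_Icc_one_eq_sum_range {M : Type*} [AddCommMonoid M] (f : ℕ → M) (n : ℕ) :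
    ∑ k ∈ Icc 1 n, f k = ∑ i ∈ range n, f (i + 1) := by
  rw [range_eq_Ico, sum_Ico_add' f 0 n 1]
  rfl

section PartialFractions
variable {K : Type*} [Field K]

theorem fwdDiff_iter_inv (l : ℕ) {x : K} (hx : ∀ k ≤ l, x + k ≠ 0) :
    Δ_[1] ^[l] (fun y : K => y⁻¹) x = (-1) ^ l * l ! / ∏ k ∈ range (l + 1), (x + k) := by
  induction l generalizing x with
  | zero => simp
  | succ l ih =>
    have hx1 : ∀ k ≤ l, x + 1 + k ≠ 0 := fun k hk => by
      convert hx (k + 1) (by omega) using 1; push_cast; ring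
    have h0 : x ≠ 0 := by simpa using hx 0 (by omega)
    have hl : x + 1 + l ≠ 0 := hx1 l le_rfl
    have hQ : ∏ k ∈ range (l + 1), (x + 1 + k) ≠ 0 :=
      prod_ne_zero_iff.2 fun k hk => hx1 k (Nat.lt_succ_iff.1 (mem_range.1 hk))
    have hshift : ∏ k ∈ range (l + 1 + 1), (x + k) = x * ∏ k ∈ range (l + 1), (x + 1 + k) := by
      rw [prod_range_succ', Nat.cast_zero, add_zero, mul_comm]
      congr 1
      exact prod_congr rfl fun k _ => by push_cast; ring
    have hA : ∏ k ∈ range (l + 1), (x + k) =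
        x * (∏ k ∈ range (l + 1), (x + 1 + k)) / (x + 1 + l) := by
      rw [eq_div_iff hl, ← hshift, prod_range_succ _ (l + 1)]; push_cast; ring
    rw [Function.iterate_succ_apply', fwdDiff, ih hx1, ih fun k hk => hx k (by omega), hA, hshift]
    generalize ∏ k ∈ range (l + 1), (x + 1 + (k : K)) = Q at *
    push_cast [Nat.factorial_succ]
    field_simp
    ring

theorem sum_range_neg_one_pow_mul_choose_div (l : ℕ) {x : K} (hx : ∀ k ≤ l, x + k ≠ 0) :
    ∑ s ∈ range (l + 1), (-1) ^ s * l.choose s / (x + s) =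
      l ! / ∏ k ∈ range (l + 1), (x + k) := by
  have hsign : ∀ k ≤ l, ((-1 : K) ^ l * (-1) ^ (l - k)) = (-1) ^ k := fun k hk => by
    obtain ⟨d, rfl⟩ := Nat.exists_eq_add_of_le hk
    rw [Nat.add_sub_cancel_left, pow_add, mul_assoc, ← pow_add, ← two_mul, pow_mul]
    simp
  have hneg : ((-1 : K) ^ l) * (-1) ^ l = 1 := by rw [← mul_pow]; simp
  calc ∑ s ∈ range (l + 1), (-1) ^ s * l.choose s / (x + s)
      = (-1) ^ l * Δ_[1] ^[l] (fun y : K => y⁻¹) x := by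
        rw [fwdDiff_iter_eq_sum_shift, mul_sum]
        refine sum_congr rfl fun k hk => ?_
        rw [zsmul_eq_mul, nsmul_one, ← hsign k (Nat.lt_succ_iff.1 (mem_range.1 hk))]
        push_cast
        ring
    _ = l ! / ∏ k ∈ range (l + 1), (x + k) := by
        rw [fwdDiff_iter_inv l hx, mul_div_assoc, ← mul_assoc, hneg, one_mul]

theorem one_div_pow_succ_mul_add (P : ℕ) {x c : K} (hx : x ≠ 0) (hc : c ≠ 0) (hxc : x + c ≠ 0) :
    1 / (x ^ (P + 1) * (x + c)) =
      ∑ i ∈ range P, (-1) ^ i / c ^ (i + 1) * (1 / x ^ (P - i + 1)) +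
        (-1) ^ P / c ^ P * (1 / (x * (x + c))) := by
  have hr : -x / c ≠ 1 := fun h => hxc (by field_simp at h; linear_combination -h)
  have hterm : ∀ i ∈ range P, (-1) ^ i / c ^ (i + 1) * (1 / x ^ (P - i + 1)) =
      (-x / c) ^ i * (1 / (c * x ^ (P + 1))) := fun i hi => by
    obtain ⟨d, rfl⟩ := Nat.exists_eq_add_of_lt (mem_range.1 hi)
    rw [show i + d + 1 - i + 1 = d + 2 by omega, div_pow, neg_pow]
    field_simp
    ring
  have hden : -x / c - 1 = -(x + c) / c := by field_simp; ring
  rw [sum_congr rfl hterm, ← sum_mul, geom_sum_eq hr, hden, div_pow, neg_pow]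
  field_simp
  ring

theorem one_div_mul_choose_eq_sum [CharZero K] {m : ℕ} (hm : m ≠ 0) (l : ℕ) :
    1 / ((m : K) * (m + l).choose l) =
      ∑ s ∈ range (l + 1), (-1) ^ s * l.choose s / ((m : K) + s) := by
  have hchoose := congrArg (Nat.cast : ℕ → K) (Nat.ascFactorial_eq_factorial_mul_choose m l)
  rw [Nat.ascFactorial_eq_prod_range] at hchoose
  push_cast at hchoose
  have hprod : ∏ k ∈ range (l + 1), ((m : K) + k) = m * (l ! * (m + l).choose l) := by
    rw [prod_range_succ', Nat.cast_zero, add_zero, mul_comm, ← hchoose]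
    exact congrArg _ (prod_congr rfl fun k _ => by push_cast; ring)
  have hm' : (m : K) ≠ 0 := Nat.cast_ne_zero.2 hm
  have hC : ((m + l).choose l : K) ≠ 0 := Nat.cast_ne_zero.2 (Nat.choose_pos (by omega)).ne'
  have hfact : (l ! : K) ≠ 0 := Nat.cast_ne_zero.2 l.factorial_ne_zero
  rw [sum_range_neg_one_pow_mul_choose_div l fun k _ => by norm_cast; omega, hprod]
  field_simp

end PartialFractions

theorem Hgen_eq_sum_range (r n : ℕ) : Hgen r n = ∑ i ∈ range n, 1 / ((i : ℝ) + 1) ^ r := by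
  rw [Hgen, sum_Icc_one_eq_sum_range]
  push_cast
  rfl

theorem hasSum_zetaVal {k : ℕ} (hk : 2 ≤ k) :
    HasSum (fun n : ℕ => 1 / ((n : ℝ) + 1) ^ k) (zetaVal k) := by
  have := (summable_nat_add_iff 1).2 (Real.summable_one_div_nat_pow.2 hk)
  push_cast at this
  exact this.hasSum

theorem hasSum_mu {q : ℕ} (hq : 1 ≤ q) (a : ℕ) :
    HasSum (fun n : ℕ => 1 / (((n + 1 : ℕ) : ℝ) ^ q * ((n + 1 + a : ℕ) : ℝ))) (mu q a) := by
  refine (Summable.of_nonneg_of_le (fun n => by positivity) (fun n => ?_)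
    (hasSum_zetaVal le_rfl).summable).hasSum
  have h1 : (1 : ℝ) ≤ n + 1 := by simp
  push_cast
  gcongr
  rw [sq]
  exact mul_le_mul (le_self_pow₀ h1 (by omega)) (by simp) (by positivity) (by positivity)

theorem mu_zero_right (q : ℕ) : mu q 0 = zetaVal (q + 1) :=
  tsum_congr fun n => by push_cast; ring

theorem hasSum_sub_add_of_antitone {f : ℕ → ℝ} (hf : Antitone f)
    (h0 : Tendsto f atTop (𝓝 0)) (d : ℕ) :
    HasSum (fun n => f n - f (n + d)) (∑ k ∈ range d, f k) := by
  have hstep : ∀ k, HasSum (fun n => f (n + k) - f (n + k + 1)) (f k) := fun k => by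
    rw [hasSum_iff_tendsto_nat_of_nonneg (fun n => sub_nonneg.2 (hf (by omega)))]
    have hsum : ∀ N, ∑ i ∈ range N, (f (i + k) - f (i + k + 1)) = f k - f (N + k) := fun N => by
      simpa [add_right_comm] using sum_range_sub' (fun i => f (i + k)) N
    simp_rw [hsum]
    simpa using tendsto_const_nhds.sub (h0.comp (tendsto_add_atTop_nat k))
  convert hasSum_sum fun k (_ : k ∈ range d) => hstep k using 1
  funext n
  simpa [add_assoc, add_comm] using (sum_range_sub' (fun i => f (n + i)) d).symm

theorem B1_comm (s j : ℕ) : B1 s j = B1 j s := by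
  unfold B1
  split_ifs with h h' h'
  · subst h; rfl
  · exact absurd h.symm h'
  · exact absurd h'.symm h
  · rw [← neg_div_neg_eq, neg_sub, neg_sub]

theorem hasSum_B1 (s j : ℕ) :
    HasSum (fun n : ℕ => 1 / (((n + 1 + s : ℕ) : ℝ) * ((n + 1 + j : ℕ) : ℝ))) (B1 s j) := by
  wlog hsj : s ≤ j generalizing s j
  · rw [B1_comm]
    simpa only [mul_comm] using this j s (by omega)
  obtain rfl | hlt := hsj.eq_or_lt
  · have hterm : (fun n : ℕ => 1 / (((n + 1 + s : ℕ) : ℝ) * ((n + 1 + s : ℕ) : ℝ))) =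
        fun n => 1 / (((n + s : ℕ) : ℝ) + 1) ^ 2 := by
      funext n
      push_cast
      ring
    rw [hterm, B1, if_pos rfl, Hgen_eq_sum_range]
    exact (hasSum_nat_add_iff' s).2 (hasSum_zetaVal le_rfl)
  · obtain ⟨d, rfl⟩ : ∃ d, j = s + (d + 1) := ⟨j - s - 1, by omega⟩
    set f : ℕ → ℝ := fun n => 1 / (((n + s : ℕ) : ℝ) + 1)
    have hf : Antitone f := fun a b hab => by
      simp only [f]; gcongr
    have h0 : Tendsto f atTop (𝓝 0) :=
      tendsto_one_div_add_atTop_nhds_zero_nat.comp (tendsto_add_atTop_nat s)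
    have hterm : (fun n : ℕ => 1 / (((n + 1 + s : ℕ) : ℝ) * ((n + 1 + (s + (d + 1)) : ℕ) : ℝ))) =
        fun n => 1 / ((d : ℝ) + 1) * (f n - f (n + (d + 1))) := by
      funext n
      simp only [f]
      push_cast
      field_simp
      ring
    have hval : B1 s (s + (d + 1)) = 1 / ((d : ℝ) + 1) * ∑ k ∈ range (d + 1), f k := by
      rw [B1, if_neg (by omega), Hgen_eq_sum_range, Hgen_eq_sum_range, sum_range_add,
        sub_add_cancel_left, Nat.cast_add, sub_add_cancel_left, neg_div_neg_eq, one_div_mul_eq_div,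
        Nat.cast_add_one]
      congr 1
      exact sum_congr rfl fun k _ => by simp only [f]; push_cast; ring
    rw [hterm, hval]
    exact (hasSum_sub_add_of_antitone hf h0 (d + 1)).mul_left _

theorem hasSum_one_div_pow_mul_choose {r : ℕ} (hr : 1 ≤ r) (l : ℕ) :
    HasSum (fun n : ℕ => 1 / (((n + 1 : ℕ) : ℝ) ^ (r + 1) * ((n + 1 + l).choose l : ℝ)))
      (zetaVal (r + 1) + ∑ a ∈ Icc 1 l, (l.choose a : ℝ) * (-1) ^ a * mu r a) := by
  have hterm : (fun n : ℕ => 1 / (((n + 1 : ℕ) : ℝ) ^ (r + 1) * ((n + 1 + l).choose l : ℝ))) =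
      fun n => ∑ s ∈ range (l + 1), (-1) ^ s * (l.choose s : ℝ) *
        (1 / (((n + 1 : ℕ) : ℝ) ^ r * ((n + 1 + s : ℕ) : ℝ))) := by
    funext n
    rw [pow_succ, mul_assoc, ← one_div_mul_one_div,
      one_div_mul_choose_eq_sum (m := n + 1) (by omega), mul_sum]
    refine sum_congr rfl fun s _ => ?_
    rw [← Nat.cast_add]
    ring
  have hval : zetaVal (r + 1) + ∑ a ∈ Icc 1 l, (l.choose a : ℝ) * (-1) ^ a * mu r a =
      ∑ s ∈ range (l + 1), (-1) ^ s * (l.choose s : ℝ) * mu r s := by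
    rw [sum_range_succ', sum_Icc_one_eq_sum_range, mu_zero_right]
    simp only [pow_zero, Nat.choose_zero_right, Nat.cast_one, mul_one, mul_comm, add_comm]
  rw [hterm, hval]
  exact hasSum_sum fun s _ => (hasSum_mu hr s).mul_left _

theorem hasSum_one_div_mul_add_mul_choose (j l : ℕ) :
    HasSum (fun n : ℕ =>
        1 / (((n + 1 : ℕ) : ℝ) * ((n + 1 + j : ℕ) : ℝ) * ((n + 1 + l).choose l : ℝ)))
      (∑ s ∈ range (l + 1), (-1) ^ s * (l.choose s : ℝ) * B1 s j) := by
  have hterm : (fun n : ℕ => 1 / (((n + 1 : ℕ) : ℝ) * ((n + 1 + j : ℕ) : ℝ) *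
      ((n + 1 + l).choose l : ℝ))) =
      fun n => ∑ s ∈ range (l + 1), (-1) ^ s * (l.choose s : ℝ) *
        (1 / (((n + 1 + s : ℕ) : ℝ) * ((n + 1 + j : ℕ) : ℝ))) := by
    funext n
    rw [mul_right_comm, mul_comm, ← one_div_mul_one_div,
      one_div_mul_choose_eq_sum (m := n + 1) (by omega), mul_sum]
    refine sum_congr rfl fun s _ => ?_
    rw [← Nat.cast_add]
    ring
  rw [hterm]
  exact hasSum_sum fun s _ => (hasSum_B1 s j).mul_left _

theorem stmt15_general (j l p : ℕ) (hj : 1 ≤ j) (hp : 1 ≤ p) :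
    ∑' n : ℕ, 1 / (((n + 1 : ℕ) : ℝ) ^ p * ((n + 1 + j : ℕ) : ℝ) *
        (Nat.choose (n + 1 + l) l : ℝ)) =
      (∑ m ∈ Finset.Icc 1 (p - 1), (-1 : ℝ) ^ (m - 1) / (j : ℝ) ^ m *
        (zetaVal (p + 1 - m) +
         ∑ a ∈ Finset.Icc 1 l, (Nat.choose l a : ℝ) * (-1 : ℝ) ^ a * mu (p - m) a)) +
      (-1 : ℝ) ^ (p - 1) / (j : ℝ) ^ (p - 1) *
        ∑ s ∈ Finset.range (l + 1), (-1 : ℝ) ^ s * (Nat.choose l s : ℝ) * B1 s j := by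
  obtain ⟨P, rfl⟩ : ∃ P, p = P + 1 := ⟨p - 1, by omega⟩
  have hterm : (fun n : ℕ => 1 / (((n + 1 : ℕ) : ℝ) ^ (P + 1) * ((n + 1 + j : ℕ) : ℝ) *
      ((n + 1 + l).choose l : ℝ))) =
      fun n => ∑ i ∈ range P, (-1) ^ i / (j : ℝ) ^ (i + 1) *
          (1 / (((n + 1 : ℕ) : ℝ) ^ (P - i + 1) * ((n + 1 + l).choose l : ℝ))) +
        (-1) ^ P / (j : ℝ) ^ P * (1 / (((n + 1 : ℕ) : ℝ) * ((n + 1 + j : ℕ) : ℝ) *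
          ((n + 1 + l).choose l : ℝ))) := by
    funext n
    rw [← one_div_mul_one_div, Nat.cast_add _ j, one_div_pow_succ_mul_add P (by positivity)
      (by positivity) (by positivity), add_mul, sum_mul]
    simp only [mul_assoc, one_div_mul_one_div]
  have hval : ∑ m ∈ Icc 1 (P + 1 - 1), (-1 : ℝ) ^ (m - 1) / (j : ℝ) ^ m *
        (zetaVal (P + 1 + 1 - m) + ∑ a ∈ Icc 1 l, (l.choose a : ℝ) * (-1) ^ a * mu (P + 1 - m) a) =
      ∑ i ∈ range P, (-1) ^ i / (j : ℝ) ^ (i + 1) *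
        (zetaVal (P - i + 1) + ∑ a ∈ Icc 1 l, (l.choose a : ℝ) * (-1) ^ a * mu (P - i) a) := by
    rw [Nat.add_sub_cancel, sum_Icc_one_eq_sum_range]
    refine sum_congr rfl fun i hi => ?_
    have hiP := mem_range.1 hi
    rw [Nat.add_sub_cancel, show P + 1 + 1 - (i + 1) = P - i + 1 by omega,
      show P + 1 - (i + 1) = P - i by omega]
  rw [hval, Nat.add_sub_cancel]
  refine HasSum.tsum_eq ?_
  rw [hterm]
  exact (hasSum_sum fun i hi => (hasSum_one_div_pow_mul_choose
    (by have := mem_range.1 hi; omega) l).mul_left _).add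
    ((hasSum_one_div_mul_add_mul_choose j l).mul_left _)

theorem stmt15 (j l p : ℕ) (hj : 1 ≤ j) (hl : 1 ≤ l) (hp : 1 ≤ p) :
    ∑' n : ℕ, 1 / (((n + 1 : ℕ) : ℝ) ^ p * ((n + 1 + j : ℕ) : ℝ) *
        (Nat.choose (n + 1 + l) l : ℝ)) =
      (∑ m ∈ Finset.Icc 1 (p - 1), (-1 : ℝ) ^ (m - 1) / (j : ℝ) ^ m *
        (zetaVal (p + 1 - m) +
         ∑ a ∈ Finset.Icc 1 l, (Nat.choose l a : ℝ) * (-1 : ℝ) ^ a * mu (p - m) a)) +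
      (-1 : ℝ) ^ (p - 1) / (j : ℝ) ^ (p - 1) *
        ∑ s ∈ Finset.range (l + 1), (-1 : ℝ) ^ s * (Nat.choose l s : ℝ) * B1 s j :=
  stmt15_general j l p hj hp
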